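/- arXiv:1508.01923 — 4 statements merged into one kernel-verified Lean document; each statement's English description precedes it below -/
import Mathlib

section
/- For all i, i' ∈ Fin d, j, j' ∈ ℕ and m, n ∈ ℤ, the endomorphisms a_{i,j}(m) and a_{i',j'}(n) of R satisfy the commutation relation a_{i,j}(m) ∘ a_{i',j'}(n) − a_{i',j'}(n) ∘ a_{i,j}(m) = m·l·δ_{m+n,0}·δ_{(i,j),(i',j')}·id_R. (Thus the assignment (u^{(i)}t^j)⊗s^k ↦ a_{i,j}(k), 𝐤 ↦ l·id_R makes the polynomial ring R a level-l representation of the affinization of the current algebra of a d-dimensional abelian Lie algebra.) -/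
/-!
The operators `a_{i,j}(k)` with `k ≥ 0` are scalars and multiples of partial derivatives, which
commute because the commutator of two partial derivatives is a derivation killing every variable;
those with `k ≤ 0` are scalars and multiplications by variables, which commute. The only nonzero
brackets are therefore `[k l ∂_s, X_t] = k l δ_{s,t}`, an instance of `[D, a·] = (D a)·` for any
derivation `D`.
-/

open MvPolynomial

/-- The operators `a_{i,j}(k)` of the polynomial realization `P(l,λ)` of the
`ĥ[t]`-module `W(λ,c,l)`: `a_{i,j}(k) = k·l·∂_{i,j,k}` for `k > 0`,
`a_{i,j}(0) = c^j·λ(i)·id`, and `a_{i,j}(k) = X_{i,j,-k}` (multiplication) for `k < 0`. -/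
noncomputable def aOp (d : ℕ) (l : ℂ) (lam : Fin d → ℂ) (c : ℂ)
    (i : Fin d) (j : ℕ) (k : ℤ) :
    Module.End ℂ (MvPolynomial (Fin d × ℕ × ℕ+) ℂ) :=
  if hk : 0 < k then
    ((k : ℂ) * l) • (pderiv (i, j, (⟨k.toNat, by omega⟩ : ℕ+))).toLinearMap
  else if hk0 : k = 0 then
    (c ^ j * lam i) • (1 : Module.End ℂ (MvPolynomial (Fin d × ℕ × ℕ+) ℂ))
  else
    LinearMap.mulLeft ℂ (X (i, j, (⟨(-k).toNat, by omega⟩ : ℕ+)))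

theorem Derivation.toLinearMap_mul_mulLeft_sub {R A : Type*} [CommSemiring R] [CommRing A]
    [Algebra R A] (D : Derivation R A A) (a : A) :
    D.toLinearMap * LinearMap.mulLeft R a - LinearMap.mulLeft R a * D.toLinearMap
      = LinearMap.mulLeft R (D a) := by
  ext x
  simp [D.leibniz, mul_comm x]

theorem LinearMap.commute_mulLeft {R A : Type*} [CommSemiring R] [CommSemiring A] [Algebra R A]
    (a b : A) : Commute (LinearMap.mulLeft R a) (LinearMap.mulLeft R b) := by
  ext x
  exact mul_left_comm a b x

namespace MvPolynomial

variable {R σ : Type*} [CommRing R]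

theorem lie_pderiv_pderiv (s t : σ) :
    ⁅pderiv (R := R) s, pderiv (R := R) t⁆ = 0 := by
  classical
  refine derivation_ext fun u => ?_
  simp [Derivation.commutator_apply, pderiv_X, Pi.single_apply, apply_ite]

theorem commute_pderiv (s t : σ) :
    Commute (pderiv (R := R) s).toLinearMap (pderiv t).toLinearMap := by
  rw [commute_iff_lie_eq, ← Derivation.commutator_coe_linear_map, lie_pderiv_pderiv]
  rfl

theorem pderiv_mul_mulLeft_X_sub [DecidableEq σ] (s t : σ) :
    (pderiv s).toLinearMap * LinearMap.mulLeft R (X t)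
      - LinearMap.mulLeft R (X t) * (pderiv s).toLinearMap = if s = t then 1 else 0 := by
  rw [Derivation.toLinearMap_mul_mulLeft_sub, pderiv_X]
  rcases eq_or_ne s t with rfl | h
  · simp [Module.End.one_eq_id]
  · simp [h, Ne.symm h]

end MvPolynomial

section aOp
variable (d : ℕ) (l : ℂ) (lam : Fin d → ℂ) (c : ℂ) (i : Fin d) (j : ℕ)

theorem aOp_pnat (p : ℕ+) :
    aOp d l lam c i j p = ((p : ℂ) * l) • (pderiv (i, j, p)).toLinearMap := by
  rw [aOp, dif_pos (by positivity)]
  rfl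

theorem aOp_zero : aOp d l lam c i j 0 = (c ^ j * lam i) • 1 := by
  simp [aOp]

theorem aOp_neg_pnat (p : ℕ+) :
    aOp d l lam c i j (-p) = LinearMap.mulLeft ℂ (X (i, j, p)) := by
  rw [aOp, dif_neg (by simp), dif_neg (by simp)]
  simp only [neg_neg]
  rfl

theorem commute_aOp_zero_left (A : Module.End ℂ (MvPolynomial (Fin d × ℕ × ℕ+) ℂ)) :
    Commute (aOp d l lam c i j 0) A := by
  rw [aOp_zero]
  exact (Commute.one_left A).smul_left _

variable (i' : Fin d) (j' : ℕ)

theorem commute_aOp_pnat (p q : ℕ+) :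
    Commute (aOp d l lam c i j p) (aOp d l lam c i' j' q) := by
  rw [aOp_pnat, aOp_pnat]
  exact ((commute_pderiv _ _).smul_left _).smul_right _

theorem commute_aOp_neg_pnat (p q : ℕ+) :
    Commute (aOp d l lam c i j (-p)) (aOp d l lam c i' j' (-q)) := by
  rw [aOp_neg_pnat, aOp_neg_pnat]
  exact LinearMap.commute_mulLeft _ _

theorem aOp_pnat_mul_aOp_neg_pnat_sub (p q : ℕ+) :
    aOp d l lam c i j p * aOp d l lam c i' j' (-q)
        - aOp d l lam c i' j' (-q) * aOp d l lam c i j p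
      = ((p : ℂ) * l * if (i, j, p) = (i', j', q) then 1 else 0) • 1 := by
  rw [aOp_pnat, aOp_neg_pnat, smul_mul_assoc, mul_smul_comm]
  -- `rw [← smul_sub]` fails: `aOp` mixes two `Module ℂ (MvPolynomial _ ℂ)` instances, equal
  -- only up to unfolding.
  refine (smul_sub _ _ _).symm.trans ?_
  rw [pderiv_mul_mulLeft_X_sub]
  refine .trans ?_ (smul_smul _ _ _)
  split_ifs <;> simp

end aOp

theorem Int.exists_pnat_or_eq_zero_or_exists_neg_pnat (m : ℤ) :
    (∃ p : ℕ+, m = p) ∨ m = 0 ∨ ∃ p : ℕ+, m = -p := by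
  rcases lt_trichotomy m 0 with h | h | h
  · exact .inr <| .inr ⟨⟨(-m).toNat, by omega⟩, by rw [PNat.mk_coe]; omega⟩
  · exact .inr <| .inl h
  · exact .inl ⟨⟨m.toNat, by omega⟩, by rw [PNat.mk_coe]; omega⟩

theorem statement0_general (d : ℕ) (l : ℂ)
    (lam : Fin d → ℂ) (c : ℂ)
    (i i' : Fin d) (j j' : ℕ) (m n : ℤ) :
    aOp d l lam c i j m * aOp d l lam c i' j' n
      - aOp d l lam c i' j' n * aOp d l lam c i j m
      = ((m : ℂ) * l * (if m + n = 0 then 1 else 0)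
          * (if (i, j) = (i', j') then 1 else 0))
        • (1 : Module.End ℂ (MvPolynomial (Fin d × ℕ × ℕ+) ℂ)) := by
  obtain ⟨p, rfl⟩ | rfl | ⟨p, rfl⟩ := m.exists_pnat_or_eq_zero_or_exists_neg_pnat
  · obtain ⟨q, rfl⟩ | rfl | ⟨q, rfl⟩ := n.exists_pnat_or_eq_zero_or_exists_neg_pnat
    · rw [(commute_aOp_pnat d l lam c i j i' j' p q).eq, sub_self, if_neg (by positivity)]
      simp
    · rw [(commute_aOp_zero_left d l lam c i' j' _).eq, sub_self]
      simp
    · rw [aOp_pnat_mul_aOp_neg_pnat_sub]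
      congr 1
      simp [add_neg_eq_zero, ite_and]
  · rw [(commute_aOp_zero_left d l lam c i j _).eq, sub_self]
    simp
  · obtain ⟨q, rfl⟩ | rfl | ⟨q, rfl⟩ := n.exists_pnat_or_eq_zero_or_exists_neg_pnat
    · rw [← neg_sub, aOp_pnat_mul_aOp_neg_pnat_sub]
      refine (neg_smul _ _).symm.trans (congrArg (· • _) ?_)
      split_ifs <;> simp_all [neg_add_eq_zero]
    · rw [(commute_aOp_zero_left d l lam c i' j' _).eq, sub_self]
      simp
    · have hpq : -(p : ℤ) + -(q : ℤ) ≠ 0 := by have := p.pos; have := q.pos; omega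
      rw [(commute_aOp_neg_pnat d l lam c i j i' j' p q).eq, sub_self, if_neg hpq]
      simp

/-- the operators `a_{i,j}(k)` satisfy the commutation relations of the
affinization of the current algebra of a `d`-dimensional abelian Lie algebra, at level `l`:
`[a_{i,j}(m), a_{i',j'}(n)] = m·l·δ_{m+n,0}·δ_{(i,j),(i',j')}·id`. -/
theorem statement0 (d : ℕ) (hd : 0 < d) (l : ℂ) (hl : l ≠ 0)
    (lam : Fin d → ℂ) (c : ℂ)
    (i i' : Fin d) (j j' : ℕ) (m n : ℤ) :
    aOp d l lam c i j m * aOp d l lam c i' j' n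
      - aOp d l lam c i' j' n * aOp d l lam c i j m
      = ((m : ℂ) * l * (if m + n = 0 then 1 else 0)
          * (if (i, j) = (i', j') then 1 else 0))
        • (1 : Module.End ℂ (MvPolynomial (Fin d × ℕ × ℕ+) ℂ)) :=
  statement0_general d l lam c i i' j j' m n
end

section
/- Let σ be any type and let U be a ℂ-linear subspace of MvPolynomial σ ℂ such that for every v ∈ σ and every p ∈ U one has (X v)·p ∈ U and pderiv v p ∈ U. If U ≠ {0} then U = MvPolynomial σ ℂ. (This is the irreducibility of the polynomial module P(l,λ) in Proposition 4.1: the operators a_{i,j}(k) for k ≠ 0 are nonzero scalar multiples of the multiplications X v and derivatives pderiv v, and the operators a_{i,j}(0) act by scalars.) -/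
/-!
Differentiating a nonzero element of `U` in a variable that occurs in it lowers its total
degree without killing it (characteristic zero), so `U` contains a nonzero constant and hence `1`.
Stability under multiplication by the variables then makes `U` an ideal containing `1`.
-/

open MvPolynomial Finsupp

namespace MvPolynomial

variable {σ R : Type*}

theorem totalDegree_pderiv_le [CommSemiring R] (i : σ) (p : MvPolynomial σ R) :
    (pderiv i p).totalDegree ≤ p.totalDegree - 1 := by
  refine Finset.sup_le fun m hm => ?_
  rw [mem_support_iff, coeff_pderiv] at hm
  have hdeg := le_totalDegree (mem_support_iff.2 (left_ne_zero_of_mul hm))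
  rw [Finsupp.sum_add_index' (fun _ => rfl) (fun _ _ _ => rfl),
    Finsupp.sum_single_index rfl] at hdeg
  omega

theorem exists_pderiv_ne_zero [CommSemiring R] [NoZeroDivisors R] [CharZero R]
    {p : MvPolynomial σ R} (hp : p.totalDegree ≠ 0) : ∃ i, pderiv i p ≠ 0 := by
  obtain ⟨m, hm, i, hi⟩ : ∃ m ∈ p.support, ∃ i, m i ≠ 0 := by
    by_contra! h
    exact hp ((totalDegree_eq_zero_iff σ p).2 h)
  refine ⟨i, fun h => ?_⟩
  have hcoeff := congrArg (coeff (m - single i 1)) h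
  rw [coeff_pderiv, tsub_add_cancel_of_le (single_le_iff.2 (Nat.one_le_iff_ne_zero.2 hi)),
    coeff_zero] at hcoeff
  exact mul_ne_zero (mem_support_iff.1 hm) (Nat.cast_add_one_ne_zero _) hcoeff

theorem mul_mem_of_forall_X_mul_mem [CommSemiring R] {U : Submodule R (MvPolynomial σ R)}
    (hX : ∀ i, ∀ q ∈ U, X i * q ∈ U) (p : MvPolynomial σ R) {q : MvPolynomial σ R}
    (hq : q ∈ U) : p * q ∈ U := by
  induction p using MvPolynomial.induction_on generalizing q with
  | C a => simpa [C_mul'] using U.smul_mem a hq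
  | add p p' hp hp' => simpa [add_mul] using U.add_mem (hp hq) (hp' hq)
  | mul_X p i hp => simpa [mul_assoc, mul_comm (X i)] using hp (hX i q hq)

theorem one_mem_of_forall_pderiv_mem [Field R] [CharZero R] {U : Submodule R (MvPolynomial σ R)}
    (hD : ∀ i, ∀ q ∈ U, pderiv i q ∈ U) {p : MvPolynomial σ R} (hp : p ∈ U) (hp0 : p ≠ 0) :
    (1 : MvPolynomial σ R) ∈ U := by
  induction hn : p.totalDegree using Nat.strong_induction_on generalizing p with
  | _ n ih =>
    rcases eq_or_ne n 0 with rfl | hn0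
    · rw [totalDegree_eq_zero_iff_eq_C] at hn
      have hc : p.coeff 0 ≠ 0 := fun h => hp0 (by rw [hn, h, C_0])
      rw [hn] at hp
      simpa [smul_eq_C_mul, ← C_mul, hc] using U.smul_mem (p.coeff 0)⁻¹ hp
    · obtain ⟨i, hi⟩ := exists_pderiv_ne_zero (hn ▸ hn0)
      exact ih _ (by have := totalDegree_pderiv_le i p; omega) (hD i p hp) hi rfl

end MvPolynomial

/-- a nonzero `ℂ`-subspace of a multivariate polynomial ring that is stable
under multiplication by every variable and under every formal partial derivative is the
whole ring (irreducibility of the polynomial module `P(l,λ)`, Proposition 4.1). -/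
theorem statement1 (σ : Type*) (U : Submodule ℂ (MvPolynomial σ ℂ))
    (hX : ∀ v : σ, ∀ p ∈ U, MvPolynomial.X v * p ∈ U)
    (hD : ∀ v : σ, ∀ p ∈ U, MvPolynomial.pderiv v p ∈ U)
    (hne : U ≠ ⊥) : U = ⊤ := by
  obtain ⟨p, hp, hp0⟩ := Submodule.exists_mem_ne_zero_of_ne_bot hne
  have hone : (1 : MvPolynomial σ ℂ) ∈ U := one_mem_of_forall_pderiv_mem hD hp hp0
  exact eq_top_iff.2 fun q _ => by simpa using mul_mem_of_forall_X_mul_mem hX q hone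
end

section
/- Let σ be any type and let s : σ → MvPolynomial σ ℂ be a family of polynomials such that the set {v ∈ σ : s v ≠ 0} is finite and pderiv u (s v) = pderiv v (s u) for all u, v ∈ σ. Then there exists a polynomial F ∈ MvPolynomial σ ℂ with pderiv v F = s v for all v ∈ σ. (This is the key integrability step in the proof of Theorem 4.2, producing the element t with a(n)·t = a(n)·w from the compatible family s_{ijn}(γ).) -/
/-!
Contract the closed polynomial 1-form `s` with the radial field: `G = ∑_{u ∈ T} X u * s u`, where
`T` contains every `v` with `s v ≠ 0`. By the symmetry `∂_u s_v = ∂_v s_u`, the Leibniz rule gives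
`∂_v G = (1 + E) s_v` for the Euler operator `E = ∑_{u ∈ T} X u ∂_u`, which multiplies the
coefficient of `X^m` by its `T`-degree. Dividing each coefficient of `G` by its `T`-degree
therefore yields a primitive `F` of `s`.
-/

namespace MvPolynomial

variable {σ R K : Type*} [CommSemiring R]

theorem coeff_X_mul_pderiv (i : σ) (p : MvPolynomial σ R) (m : σ →₀ ℕ) :
    coeff m (X i * pderiv i p) = m i * coeff m p := by
  classical
  induction p using MvPolynomial.induction_on' with
  | add p q hp hq => simp only [map_add, mul_add, coeff_add, hp, hq]
  | monomial n a =>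
    rw [X_mul_pderiv_monomial, coeff_smul, coeff_monomial]
    split_ifs with h <;> simp [h, nsmul_eq_mul]

noncomputable def euler (T : Finset σ) (p : MvPolynomial σ R) : MvPolynomial σ R :=
  ∑ i ∈ T, X i * pderiv i p

theorem coeff_euler (T : Finset σ) (p : MvPolynomial σ R) (m : σ →₀ ℕ) :
    coeff m (euler T p) = (∑ i ∈ T, m i : ℕ) * coeff m p := by
  simp only [euler, coeff_sum, coeff_X_mul_pderiv, Nat.cast_sum, Finset.sum_mul]

theorem pderiv_sum_X_mul {s : σ → MvPolynomial σ R} {T : Finset σ}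
    (hT : ∀ v ∉ T, s v = 0) (hsym : ∀ u v, pderiv u (s v) = pderiv v (s u)) (v : σ) :
    pderiv v (∑ u ∈ T, X u * s u) = s v + euler T (s v) := by
  classical
  simp only [map_sum, pderiv_mul, pderiv_X, hsym v, Finset.sum_add_distrib, euler]
  congr 1
  by_cases hv : v ∈ T
  · simp [Pi.single_apply, hv]
  · simp [Pi.single_apply, hv, hT v hv]

variable [Field K]

/-- A right inverse of `euler T` on polynomials without terms of `T`-degree zero; those terms are
sent to `0` since `(0 : K)⁻¹ = 0`. -/
noncomputable def eulerInv (T : Finset σ) (p : MvPolynomial σ K) : MvPolynomial σ K :=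
  ∑ m ∈ p.support, monomial m (((∑ i ∈ T, m i : ℕ) : K)⁻¹ * coeff m p)

theorem coeff_eulerInv (T : Finset σ) (p : MvPolynomial σ K) (m : σ →₀ ℕ) :
    coeff m (eulerInv T p) = ((∑ i ∈ T, m i : ℕ) : K)⁻¹ * coeff m p := by
  classical
  rw [eulerInv, coeff_sum]
  simp only [coeff_monomial, Finset.sum_ite_eq', mem_support_iff, ite_not]
  split_ifs with h <;> simp [h]

variable [CharZero K]

theorem pderiv_eulerInv_sum_X_mul {s : σ → MvPolynomial σ K} {T : Finset σ}
    (hT : ∀ v ∉ T, s v = 0) (hsym : ∀ u v, pderiv u (s v) = pderiv v (s u)) (v : σ) :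
    pderiv v (eulerInv T (∑ u ∈ T, X u * s u)) = s v := by
  classical
  ext m
  have hG := coeff_pderiv (i := v) (∑ u ∈ T, X u * s u) m
  rw [pderiv_sum_X_mul hT hsym, coeff_add, coeff_euler] at hG
  rw [coeff_pderiv, coeff_eulerInv, mul_assoc, ← hG]
  by_cases hv : v ∈ T
  · have hdeg : ∑ i ∈ T, (m + Finsupp.single v 1 : σ →₀ ℕ) i = ∑ i ∈ T, m i + 1 := by
      simp [Finset.sum_add_distrib, Finsupp.single_apply, hv]
    rw [hdeg, ← one_add_mul, add_comm (1 : K), Nat.cast_succ,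
      inv_mul_cancel_left₀ (Nat.cast_add_one_ne_zero _)]
  · simp [hT v hv]

theorem exists_pderiv_eq_of_pderiv_symm {s : σ → MvPolynomial σ K}
    (hfin : {v | s v ≠ 0}.Finite) (hsym : ∀ u v, pderiv u (s v) = pderiv v (s u)) :
    ∃ F : MvPolynomial σ K, ∀ v, pderiv v F = s v :=
  ⟨_, pderiv_eulerInv_sum_X_mul (T := hfin.toFinset) (by simp) hsym⟩

end MvPolynomial

/-- a compatible family `s : σ → MvPolynomial σ ℂ` of polynomials (finitely many
nonzero, with symmetric partial derivatives `∂_u (s v) = ∂_v (s u)`) is integrable: there is a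
polynomial `F` with `∂_v F = s v` for all `v` (key integrability step in Theorem 4.2). -/
theorem statement2 (σ : Type*) (s : σ → MvPolynomial σ ℂ)
    (hfin : {v : σ | s v ≠ 0}.Finite)
    (hsym : ∀ u v : σ, MvPolynomial.pderiv u (s v) = MvPolynomial.pderiv v (s u)) :
    ∃ F : MvPolynomial σ ℂ, ∀ v : σ, MvPolynomial.pderiv v F = s v :=
  MvPolynomial.exists_pderiv_eq_of_pderiv_symm hfin hsym
end

section
/- Let W be a complex vector space equipped with: endomorphisms A(i,j,k) ∈ End_ℂ(W) for i ∈ Fin d, j ∈ ℕ, k ∈ ℤ, and a family of subspaces (W_n)_{n∈ℤ} forming an internal direct sum decomposition W = ⊕_{n∈ℤ} W_n, such that (i) A(i,j,k)(W_m) ⊆ W_{m−k} for all m, k ∈ ℤ; (ii) A(i,j,m) ∘ A(i',j',n) − A(i',j',n) ∘ A(i,j,m) = m·l·δ_{m+n,0}·δ_{(i,j),(i',j')}·id_W for all indices; (iii) for every w ∈ W and every k > 0, A(i,j,k)w = 0 for all but finitely many j ∈ ℕ; (iv) there exists N ∈ ℤ with W_n = 0 for all n < N. Let Ω(W) := {w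 ∈ W : A(i,j,k)w = 0 for all i ∈ Fin d, j ∈ ℕ and all integers k > 0}. Then the ℂ-linear map Φ : MvPolynomial (Fin d × ℕ × ℕ+) ℂ ⊗_ℂ Ω(W) → W determined on monomials by Φ(X^e ⊗ w) = (∏_{(i,j,n) ∈ supp(e)} A(i,j,−n)^{e(i,j,n)}) w — the product taken in any order, the operators A(i,j,−n) pairwise commuting by (ii) — is a linear isomorphism. In particular every restricted ℤ-graded level-l module W for the affinization of the abelian current algebra satisfies W ≅ M(l) ⊗ Ω(W) (Theorem 4.2). -/
/-!
The creation operators `A i j (-n)` commute, so they make `W` a module over the polynomial ring in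
variables `x_(i,j,n)`, and `Φ` is `F ⊗ w ↦ F • w`. The commutator with an annihilation operator
`A i j n` is a derivation of this action, equal to `n l ∂/∂x_(i,j,n)` on the vacuum space.

Injectivity: an element of minimal degree in the kernel has all its partial derivatives in the
kernel, hence zero, so it is a constant, i.e. a vacuum vector, which `Φ` fixes.

Surjectivity, by induction on the grading, which is bounded below: for `w ∈ W_m` the vectors
`A i j n w` have lower degree, so `A i j n w = n l Φ(p_(i,j,n))`. Since annihilation operators
commute and `Φ` is injective, `p` is a closed polynomial one-form, with finitely many nonzero
components by restrictedness. Hence `p = ∇ f`, and `w - Φ f` is a vacuum vector.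
-/

open MvPolynomial TensorProduct
open scoped IsMulCommutative

namespace MvPolynomial

variable {σ R A : Type*} [CommRing R] [Ring A] [Algebra R A]

noncomputable def aevalOfCommute (B : σ → A) (hB : ∀ u v, Commute (B u) (B v)) :
    MvPolynomial σ R →ₐ[R] A :=
  have := Algebra.isMulCommutative_adjoin R (s := Set.range B)
    (by rintro _ ⟨u, rfl⟩ _ ⟨v, rfl⟩; exact hB u v)
  (Algebra.adjoin R (Set.range B)).val.comp
    (aeval fun v => ⟨B v, Algebra.subset_adjoin ⟨v, rfl⟩⟩)

variable (B : σ → A) (hB : ∀ u v, Commute (B u) (B v))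

@[simp]
theorem aevalOfCommute_X (v : σ) : aevalOfCommute (R := R) B hB (X v) = B v := by
  simp [aevalOfCommute]

theorem aevalOfCommute_monomial_one (e : σ →₀ ℕ) :
    aevalOfCommute (R := R) B hB (monomial e 1) =
      e.support.noncommProd (fun v => B v ^ e v) (fun x _ y _ _ => (hB x y).pow_pow _ _) := by
  have := Algebra.isMulCommutative_adjoin R (s := Set.range B)
    (by rintro _ ⟨u, rfl⟩ _ ⟨v, rfl⟩; exact hB u v)
  rw [aevalOfCommute, AlgHom.comp_apply, aeval_monomial, map_one, one_mul, Finsupp.prod,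
    ← Finset.noncommProd_eq_prod]
  exact (Finset.map_noncommProd _ _ _ _).trans
    (Finset.noncommProd_congr rfl (fun v _ => by simp) _)

theorem commutator_aevalOfCommute (D : Derivation R (MvPolynomial σ R) (MvPolynomial σ R))
    (c : A) (hc : ∀ u, c * B u - B u * c = aevalOfCommute B hB (D (X u)))
    (F : MvPolynomial σ R) :
    c * aevalOfCommute B hB F - aevalOfCommute B hB F * c = aevalOfCommute B hB (D F) := by
  induction F using MvPolynomial.induction_on with
  | C a => simp [derivation_C, Algebra.commutes]
  | add F G hF hG => simp only [map_add, mul_add, add_mul, ← hF, ← hG]; abel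
  | mul_X F u hF =>
    rw [D.leibniz, smul_eq_mul, smul_eq_mul, mul_comm (X u), map_add, map_mul, map_mul, map_mul,
      aevalOfCommute_X, ← hF, ← hc]
    noncomm_ring

end MvPolynomial

namespace Finsupp

variable {σ K M : Type*}

section CommSemiring

variable (K) [CommSemiring K] [AddCommMonoid M] [Module K M]

/-- The partial derivative `∂/∂x_v` of an `M`-valued polynomial in the variables `σ`, the polynomial
being given by its coefficient function `(σ →₀ ℕ) →₀ M`. -/
noncomputable def pderiv (v : σ) : ((σ →₀ ℕ) →₀ M) →ₗ[K] (σ →₀ ℕ) →₀ M :=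
  Finsupp.lsum K fun e => Finsupp.lsingle (e - single v 1) ∘ₗ ((e v : K) • LinearMap.id)

variable {K}

theorem pderiv_single (v : σ) (e : σ →₀ ℕ) (m : M) :
    pderiv K v (single e m) = single (e - single v 1) ((e v : K) • m) := by
  simp [pderiv]

theorem pderiv_apply (v : σ) (f : (σ →₀ ℕ) →₀ M) (e : σ →₀ ℕ) :
    pderiv K v f e = ((e v + 1 : ℕ) : K) • f (e + single v 1) := by
  classical
  induction f using Finsupp.induction_linear with
  | zero => simp
  | add f g hf hg => simp [hf, hg]
  | single e' m =>
    rw [pderiv_single, single_apply, single_apply]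
    by_cases he : e' = e + single v 1
    · subst he
      simp
    rw [if_neg he, smul_zero, ite_eq_right_iff]
    intro he'
    have : e' v = 0 := by
      by_contra h
      rw [← he', tsub_add_cancel_of_le (single_le_iff.2 (Nat.one_le_iff_ne_zero.2 h))] at he
      exact he rfl
    rw [this, Nat.cast_zero, zero_smul]

theorem mem_support_of_mem_support_pderiv {v : σ} {f : (σ →₀ ℕ) →₀ M} {e : σ →₀ ℕ}
    (he : e ∈ (pderiv K v f).support) : e + single v 1 ∈ f.support := by
  rw [mem_support_iff, pderiv_apply] at he
  exact mem_support_iff.2 fun h => he (by rw [h, smul_zero])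

theorem smul_apply_tsub_single_symm {p : σ → (σ →₀ ℕ) →₀ M}
    (hp : ∀ u v, pderiv K u (p v) = pderiv K v (p u)) {u v : σ} {E : σ →₀ ℕ}
    (hu : 1 ≤ E u) (hv : 1 ≤ E v) :
    (E v : K) • p u (E - single u 1) = (E u : K) • p v (E - single v 1) := by
  classical
  rcases eq_or_ne u v with rfl | huv
  · rfl
  obtain ⟨x, rfl⟩ : ∃ x, E = x + single u 1 + single v 1 := by
    refine ⟨E - single v 1 - single u 1, ?_⟩
    rw [tsub_add_cancel_of_le, tsub_add_cancel_of_le (single_le_iff.2 hv)]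
    simpa [single_le_iff, single_apply, huv] using hu
  have := congr($(hp u v) x)
  rw [pderiv_apply, pderiv_apply] at this
  rw [add_right_comm, add_tsub_cancel_right, add_right_comm, add_tsub_cancel_right]
  simp only [coe_add, Pi.add_apply, single_eq_same, single_eq_of_ne huv, single_eq_of_ne huv.symm]
  simpa using this.symm

end CommSemiring

variable [Field K] [CharZero K] [AddCommGroup M] [Module K M]

theorem eq_single_zero_of_forall_pderiv_eq_zero {f : (σ →₀ ℕ) →₀ M}
    (hf : ∀ v, pderiv K v f = 0) : f = single 0 (f 0) := by
  classical
  ext e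
  by_cases he : e = 0
  · simp [he]
  obtain ⟨v, hv⟩ : ∃ v, e v ≠ 0 := by
    by_contra! h
    exact he (Finsupp.ext h)
  have hev : e - single v 1 + single v 1 = e :=
    tsub_add_cancel_of_le (single_le_iff.2 (Nat.one_le_iff_ne_zero.2 hv))
  have := pderiv_apply (K := K) v f (e - single v 1)
  rw [hf, hev, zero_apply] at this
  rw [single_apply, if_neg (Ne.symm he)]
  exact (smul_eq_zero.1 this.symm).resolve_left (Nat.cast_ne_zero.2 (Nat.succ_ne_zero _))

theorem injective_of_map_pderiv_eq_zero {N : Type*} [AddCommGroup N] [Module K N]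
    (T : ((σ →₀ ℕ) →₀ M) →ₗ[K] N) (h0 : ∀ m, T (single 0 m) = 0 → m = 0)
    (hT : ∀ v f, T f = 0 → T (pderiv K v f) = 0) : Function.Injective T := by
  suffices ∀ n : ℕ, ∀ f, (∀ e ∈ f.support, degree e < n) → T f = 0 → f = 0 by
    refine (injective_iff_map_eq_zero T).2 fun f hf =>
      this (f.support.sup degree + 1) f (fun e he => ?_) hf
    exact Nat.lt_succ_of_le (Finset.le_sup (f := degree) he)
  intro n
  induction n with
  | zero => exact fun f hdeg _ => support_eq_empty.1 (Finset.eq_empty_of_forall_notMem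
      fun e he => Nat.not_lt_zero _ (hdeg e he))
  | succ n ih =>
    intro f hdeg hf
    have hD : ∀ v, pderiv K v f = 0 := fun v => ih _ (fun e he => by
      have := hdeg _ (mem_support_of_mem_support_pderiv he)
      rw [map_add, degree_single] at this
      omega) (hT v f hf)
    rw [eq_single_zero_of_forall_pderiv_eq_zero hD] at hf ⊢
    rw [h0 _ hf, single_zero]

/-- The primitive has coefficients `f E = (deg E)⁻¹ ∑ᵤ pᵤ (E - δᵤ)`; it works by Euler's
identity. -/
theorem exists_forall_pderiv_eq (p : σ → (σ →₀ ℕ) →₀ M) (hfin : (Function.support p).Finite)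
    (hp : ∀ u v, pderiv K u (p v) = pderiv K v (p u)) : ∃ f, ∀ v, pderiv K v f = p v := by
  classical
  let g : (σ →₀ ℕ) → M := fun E => ((degree E : ℕ) : K)⁻¹ • ∑ u ∈ E.support, p u (E - single u 1)
  have hg : (Function.support g).Finite := by
    refine (hfin.biUnion fun u _ => (p u).support.finite_toSet.image (· + single u 1)).subset ?_
    intro E hE
    obtain ⟨u, hu, hpu⟩ := Finset.exists_ne_zero_of_sum_ne_zero (right_ne_zero_of_smul hE)
    refine Set.mem_biUnion (x := u) (fun h => hpu (by rw [h, zero_apply]))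
      ⟨E - single u 1, mem_support_iff.2 hpu, tsub_add_cancel_of_le ?_⟩
    exact single_le_iff.2 (Nat.one_le_iff_ne_zero.2 (mem_support_iff.1 hu))
  refine ⟨ofSupportFinite g hg, fun v => ext fun e => ?_⟩
  set E := e + single v 1
  have hEv : E v = e v + 1 := by simp [E]
  have hterm : ∀ u ∈ E.support, (E v : K) • p u (E - single u 1) = (E u : K) • p v e := by
    intro u hu
    rw [smul_apply_tsub_single_symm hp (Nat.one_le_iff_ne_zero.2 (mem_support_iff.1 hu)) (by omega),
      add_tsub_cancel_right]
  have hdeg : ((degree E : ℕ) : K) ≠ 0 := by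
    rw [map_add, degree_single]; exact Nat.cast_ne_zero.2 (Nat.succ_ne_zero _)
  rw [pderiv_apply, ofSupportFinite_coe, ← hEv]
  simp only [g]
  rw [smul_comm, Finset.smul_sum, Finset.sum_congr rfl hterm, ← Finset.sum_smul, ← Nat.cast_sum,
    ← degree_apply, smul_smul, inv_mul_cancel₀ hdeg, one_smul]

end Finsupp

namespace HeisenbergModule

abbrev Mode (d : ℕ) := Fin d × ℕ × ℕ+

variable {d : ℕ} {l : ℂ} {W : Type*} [AddCommGroup W] [Module ℂ W]

def HeisenbergRelations (l : ℂ) (A : Fin d → ℕ → ℤ → Module.End ℂ W) : Prop :=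
  ∀ (i : Fin d) (j : ℕ) (m : ℤ) (i' : Fin d) (j' : ℕ) (n : ℤ),
    A i j m * A i' j' n - A i' j' n * A i j m
      = ((m : ℂ) * l * (if m + n = 0 then 1 else 0) * (if (i, j) = (i', j') then 1 else 0)) • 1

variable (A : Fin d → ℕ → ℤ → Module.End ℂ W)

def creation (v : Mode d) : Module.End ℂ W := A v.1 v.2.1 (-((v.2.2 : ℕ) : ℤ))

def annihilation (v : Mode d) : Module.End ℂ W := A v.1 v.2.1 ((v.2.2 : ℕ) : ℤ)

def vacuum : Submodule ℂ W := ⨅ v : Mode d, LinearMap.ker (annihilation A v)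

variable {A}

theorem mem_vacuum {w : W} : w ∈ vacuum A ↔ ∀ v, annihilation A v w = 0 := by
  simp [vacuum]

theorem eq_vacuum {Om : Submodule ℂ W}
    (hOm : ∀ w : W, w ∈ Om ↔ ∀ (i : Fin d) (j : ℕ) (k : ℤ), 0 < k → A i j k w = 0) :
    Om = vacuum A := by
  ext w
  rw [hOm, mem_vacuum]
  refine ⟨fun h v => h _ _ _ (by simp), fun h i j k hk => ?_⟩
  lift k to ℕ using hk.le
  exact h (i, j, ⟨k, by omega⟩)

theorem mode_mul_level_ne_zero (hl : l ≠ 0) (v : Mode d) : ((v.2.2 : ℕ) : ℂ) * l ≠ 0 :=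
  mul_ne_zero (Nat.cast_ne_zero.2 v.2.2.ne_zero) hl

theorem commute_of_add_ne_zero (hbr : HeisenbergRelations l A) {i i' : Fin d} {j j' : ℕ}
    {m n : ℤ} (h : m + n ≠ 0) : Commute (A i j m) (A i' j' n) := by
  have := hbr i j m i' j' n
  rwa [if_neg h, mul_zero, zero_mul, zero_smul, sub_eq_zero] at this

theorem commute_creation (hbr : HeisenbergRelations l A) (u v : Mode d) :
    Commute (creation A u) (creation A v) :=
  commute_of_add_ne_zero hbr (by have := u.2.2.pos; have := v.2.2.pos; omega)

theorem commute_annihilation (hbr : HeisenbergRelations l A) (u v : Mode d) :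
    Commute (annihilation A u) (annihilation A v) :=
  commute_of_add_ne_zero hbr (by have := u.2.2.pos; have := v.2.2.pos; omega)

theorem annihilation_mul_creation_sub (hbr : HeisenbergRelations l A) (v u : Mode d) :
    annihilation A v * creation A u - creation A u * annihilation A v =
      if u = v then (((v.2.2 : ℕ) : ℂ) * l) • 1 else 0 := by
  obtain ⟨i, j, n⟩ := v
  obtain ⟨i', j', n'⟩ := u
  have := hbr i j n i' j' (-((n' : ℕ) : ℤ))
  simp only [creation, annihilation]
  rw [this]
  by_cases h : (i', j', n') = (i, j, n)
  · simp only [Prod.mk.injEq] at h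
    obtain ⟨rfl, rfl, rfl⟩ := h
    simp
  · rw [if_neg h]
    split_ifs with h1 h2 <;> try simp
    obtain ⟨rfl, rfl⟩ := Prod.mk.inj h2
    exact (h (by simp [PNat.coe_inj.1 (by omega : (n' : ℕ) = n)])).elim

noncomputable def creationEval (hbr : HeisenbergRelations l A) :
    MvPolynomial (Mode d) ℂ →ₐ[ℂ] Module.End ℂ W :=
  aevalOfCommute (creation A) (commute_creation hbr)

variable (hbr : HeisenbergRelations l A)

theorem annihilation_mul_creationEval_sub (v : Mode d) (F : MvPolynomial (Mode d) ℂ) :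
    annihilation A v * creationEval hbr F - creationEval hbr F * annihilation A v =
      (((v.2.2 : ℕ) : ℂ) * l) • creationEval hbr (pderiv v F) := by
  classical
  rw [← map_smul, ← Derivation.smul_apply]
  refine commutator_aevalOfCommute _ _ _ _ (fun u => ?_) F
  rw [annihilation_mul_creation_sub hbr, Derivation.smul_apply, pderiv_X, Pi.single_apply]
  split_ifs <;> simp [Algebra.smul_def]

/-- The map `Φ`, with `MvPolynomial (Mode d) ℂ ⊗ Ω(W)` identified with
`(Mode d →₀ ℕ) →₀ Ω(W)` through the monomial basis. -/
noncomputable def fockMap : ((Mode d →₀ ℕ) →₀ vacuum A) →ₗ[ℂ] W :=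
  Finsupp.lsum ℂ fun e => creationEval hbr (monomial e 1) ∘ₗ (vacuum A).subtype

theorem fockMap_single (e : Mode d →₀ ℕ) (w : vacuum A) :
    fockMap hbr (Finsupp.single e w) = creationEval hbr (monomial e 1) w := by
  simp [fockMap]

theorem fockMap_single_zero (w : vacuum A) : fockMap hbr (Finsupp.single 0 w) = w := by
  simp [fockMap_single]

theorem annihilation_fockMap (v : Mode d) (f : (Mode d →₀ ℕ) →₀ vacuum A) :
    annihilation A v (fockMap hbr f) =
      (((v.2.2 : ℕ) : ℂ) * l) • fockMap hbr (Finsupp.pderiv ℂ v f) := by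
  induction f using Finsupp.induction_linear with
  | zero => simp
  | add f g hf hg => rw [map_add, map_add, hf, hg, map_add, map_add, smul_add]
  | single e w =>
    have := congr($(annihilation_mul_creationEval_sub hbr v (monomial e 1)) (w : W))
    rw [LinearMap.sub_apply, Module.End.mul_apply, Module.End.mul_apply, mem_vacuum.1 w.2 v,
      map_zero, sub_zero] at this
    have hmon : monomial (e - Finsupp.single v 1) ((e v : ℕ) : ℂ) =
        ((e v : ℕ) : ℂ) • monomial (e - Finsupp.single v 1) (1 : ℂ) := by
      rw [smul_monomial, smul_eq_mul, mul_one]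
    rw [fockMap_single, Finsupp.pderiv_single, fockMap_single, this, pderiv_monomial, one_mul,
      hmon, map_smul]
    simp

theorem fockMap_injective (hl : l ≠ 0) : Function.Injective (fockMap hbr) := by
  refine Finsupp.injective_of_map_pderiv_eq_zero _ (fun w hw => ?_) fun v f hf => ?_
  · rwa [fockMap_single_zero, Submodule.coe_eq_zero] at hw
  · have := annihilation_fockMap hbr v f
    rw [hf, map_zero, eq_comm, smul_eq_zero] at this
    exact this.resolve_left (mode_mul_level_ne_zero hl v)

theorem fockMap_pderiv (hl : l ≠ 0) (v : Mode d) (f : (Mode d →₀ ℕ) →₀ vacuum A) :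
    fockMap hbr (Finsupp.pderiv ℂ v f) =
      (((v.2.2 : ℕ) : ℂ) * l)⁻¹ • annihilation A v (fockMap hbr f) := by
  rw [annihilation_fockMap, smul_smul, inv_mul_cancel₀ (mode_mul_level_ne_zero hl v), one_smul]

variable {Wgr : ℤ → Submodule ℂ W} {N : ℤ}

theorem finite_setOf_annihilation_ne_zero
    (hgr : ∀ (i : Fin d) (j : ℕ) (m k : ℤ), ∀ w ∈ Wgr m, A i j k w ∈ Wgr (m - k))
    (hres : ∀ (w : W) (k : ℤ), 0 < k → ∀ i : Fin d, {j : ℕ | A i j k w ≠ 0}.Finite)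
    (hN : ∀ n < N, Wgr n = ⊥) {m : ℤ} {w : W} (hw : w ∈ Wgr m) :
    {v : Mode d | annihilation A v w ≠ 0}.Finite := by
  have hK : ∀ v ∈ {v : Mode d | annihilation A v w ≠ 0}, ((v.2.2 : ℕ) : ℤ) ≤ m - N := by
    intro v hv
    by_contra h
    have := hgr v.1 v.2.1 m ((v.2.2 : ℕ) : ℤ) w hw
    rw [hN _ (by omega), Submodule.mem_bot] at this
    exact hv this
  refine (Set.finite_iUnion fun i : Fin d =>
    ((Set.finite_le_nat (m - N).toNat).preimage PNat.coe_injective.injOn).biUnion fun n _ =>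
      (hres w n (Nat.cast_pos.2 n.pos) i).image fun j => (i, j, n)).subset ?_
  rintro ⟨i, j, n⟩ hv
  simp only [Set.mem_iUnion, Set.mem_image]
  have h := hK _ hv
  dsimp only at h
  exact ⟨i, n, show (n : ℕ) ≤ (m - N).toNat by omega, j, hv, rfl⟩

theorem le_range_fockMap_of_forall_lt (hl : l ≠ 0)
    (hgr : ∀ (i : Fin d) (j : ℕ) (m k : ℤ), ∀ w ∈ Wgr m, A i j k w ∈ Wgr (m - k))
    (hres : ∀ (w : W) (k : ℤ), 0 < k → ∀ i : Fin d, {j : ℕ | A i j k w ≠ 0}.Finite)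
    (hN : ∀ n < N, Wgr n = ⊥) {m : ℤ} (hlt : ∀ n < m, Wgr n ≤ LinearMap.range (fockMap hbr)) :
    Wgr m ≤ LinearMap.range (fockMap hbr) := by
  intro w hw
  have hC : ∀ v : Mode d, ∃ f, fockMap hbr f = (((v.2.2 : ℕ) : ℂ) * l)⁻¹ • annihilation A v w :=
    fun v => LinearMap.mem_range.1 <| hlt _ (by have := v.2.2.pos; omega)
      (Submodule.smul_mem _ _ (hgr v.1 v.2.1 m _ w hw))
  choose p hp using hC
  have hfin : (Function.support p).Finite :=
    (finite_setOf_annihilation_ne_zero hgr hres hN hw).subset fun v hv h0 =>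
      hv (fockMap_injective hbr hl (by rw [hp, h0, smul_zero, map_zero]))
  have hsymm : ∀ u v, Finsupp.pderiv ℂ u (p v) = Finsupp.pderiv ℂ v (p u) := fun u v =>
    fockMap_injective hbr hl <| by
      rw [fockMap_pderiv hbr hl, fockMap_pderiv hbr hl, hp, hp, map_smul, map_smul, smul_smul,
        smul_smul, mul_comm, ← Module.End.mul_apply, ← Module.End.mul_apply,
        (commute_annihilation hbr u v).eq]
  obtain ⟨f, hf⟩ := Finsupp.exists_forall_pderiv_eq p hfin hsymm
  have hvac : w - fockMap hbr f ∈ vacuum A := mem_vacuum.2 fun v => by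
    rw [map_sub, annihilation_fockMap, hf, hp, smul_smul,
      mul_inv_cancel₀ (mode_mul_level_ne_zero hl v), one_smul, sub_self]
  exact ⟨Finsupp.single 0 ⟨_, hvac⟩ + f, by rw [map_add, fockMap_single_zero, sub_add_cancel]⟩

theorem fockMap_surjective (hl : l ≠ 0) (hspan : ⨆ n, Wgr n = ⊤)
    (hgr : ∀ (i : Fin d) (j : ℕ) (m k : ℤ), ∀ w ∈ Wgr m, A i j k w ∈ Wgr (m - k))
    (hres : ∀ (w : W) (k : ℤ), 0 < k → ∀ i : Fin d, {j : ℕ | A i j k w ≠ 0}.Finite)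
    (hN : ∀ n < N, Wgr n = ⊥) : Function.Surjective (fockMap hbr) := by
  have h : ∀ k : ℕ, ∀ m < N + k, Wgr m ≤ LinearMap.range (fockMap hbr) := by
    intro k
    induction k with
    | zero => exact fun m hm => by rw [hN m (by simpa using hm)]; exact bot_le
    | succ k ih =>
      exact fun m hm => le_range_fockMap_of_forall_lt hbr hl hgr hres hN fun n hn =>
        ih n (by push_cast at hm; omega)
  rw [← LinearMap.range_eq_top, eq_top_iff, ← hspan, iSup_le_iff]
  exact fun m => h ((m - N).toNat + 1) m (by omega)

end HeisenbergModule

open HeisenbergModule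

/-- Theorem 4.2: let `W` be a complex vector space with operators `A i j k`
(`i ∈ Fin d`, `j ∈ ℕ`, `k ∈ ℤ`) and an internal direct sum decomposition `W = ⊕_{n∈ℤ} Wgr n`
satisfying the grading, level-`l` commutation, restrictedness and lower-truncation conditions
(i)–(iv) of a restricted ℤ-graded level-`l` module for the affinization of the abelian current
algebra.  Let `Om = Ω(W)` be the vacuum space.  Then any ℂ-linear map
`Φ : MvPolynomial (Fin d × ℕ × ℕ+) ℂ ⊗[ℂ] Ω(W) → W` sending each `X^e ⊗ w` to
`(∏_{(i,j,n) ∈ supp e} A i j (-n)^{e (i,j,n)}) w` (the operators pairwise commute by (ii))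
is a linear isomorphism; i.e. `W ≅ M(l) ⊗ Ω(W)`. -/
theorem statement4 (d : ℕ) (l : ℂ) (hl : l ≠ 0)
    (W : Type*) [AddCommGroup W] [Module ℂ W]
    (A : Fin d → ℕ → ℤ → Module.End ℂ W)
    (Wgr : ℤ → Submodule ℂ W)
    (hspan : (⨆ n, Wgr n) = ⊤)
    (hgr : ∀ (i : Fin d) (j : ℕ) (m k : ℤ), ∀ w ∈ Wgr m, A i j k w ∈ Wgr (m - k))
    (hbr : ∀ (i : Fin d) (j : ℕ) (m : ℤ) (i' : Fin d) (j' : ℕ) (n : ℤ),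
      A i j m * A i' j' n - A i' j' n * A i j m
        = ((m : ℂ) * l * (if m + n = 0 then 1 else 0)
            * (if (i, j) = (i', j') then 1 else 0)) • 1)
    (hres : ∀ (w : W) (k : ℤ), 0 < k → ∀ i : Fin d, {j : ℕ | A i j k w ≠ 0}.Finite)
    (hbdd : ∃ N : ℤ, ∀ n < N, Wgr n = ⊥)
    (Om : Submodule ℂ W)
    (hOm : ∀ w : W, w ∈ Om ↔ ∀ (i : Fin d) (j : ℕ) (k : ℤ), 0 < k → A i j k w = 0)
    (Φ : (MvPolynomial (Fin d × ℕ × ℕ+) ℂ) ⊗[ℂ] Om →ₗ[ℂ] W)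
    (hΦ : ∀ (e : (Fin d × ℕ × ℕ+) →₀ ℕ) (w : Om),
      Φ ((MvPolynomial.monomial e 1) ⊗ₜ[ℂ] (w : Om))
        = (e.support.noncommProd
            (fun v => (A v.1 v.2.1 (-((v.2.2 : ℕ) : ℤ))) ^ (e v))
            (fun x _ y _ _ => Commute.pow_pow (by
              have h := hbr x.1 x.2.1 (-((x.2.2 : ℕ) : ℤ)) y.1 y.2.1 (-((y.2.2 : ℕ) : ℤ))
              have hz : (-((x.2.2 : ℕ) : ℤ)) + (-((y.2.2 : ℕ) : ℤ)) ≠ 0 := by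
                have hx1 := x.2.2.pos
                have hy1 := y.2.2.pos
                omega
              rw [if_neg hz] at h
              have h0 : A x.1 x.2.1 (-((x.2.2 : ℕ) : ℤ)) * A y.1 y.2.1 (-((y.2.2 : ℕ) : ℤ))
                  - A y.1 y.2.1 (-((y.2.2 : ℕ) : ℤ)) * A x.1 x.2.1 (-((x.2.2 : ℕ) : ℤ)) = 0 := by
                rw [h]
                simp
              exact sub_eq_zero.mp h0) _ _)) (w : W)) :
    Function.Bijective Φ := by
  have hrel : HeisenbergRelations l A := hbr
  obtain ⟨N, hN⟩ := hbdd
  obtain rfl := eq_vacuum hOm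
  let e := equivFinsuppOfBasisLeft (N := vacuum A) (basisMonomials (Fin d × ℕ × ℕ+) ℂ)
  have hΦe : Φ ∘ₗ e.symm.toLinearMap = fockMap hrel := by
    refine Finsupp.lhom_ext fun ex w => ?_
    rw [LinearMap.comp_apply, LinearEquiv.coe_coe, equivFinsuppOfBasisLeft_symm_apply,
      Finsupp.sum_single_index (by simp), coe_basisMonomials, fockMap_single, creationEval,
      aevalOfCommute_monomial_one]
    exact hΦ ex w
  have hbij : Function.Bijective (Φ ∘ₗ e.symm.toLinearMap) := by
    rw [hΦe]
    exact ⟨fockMap_injective hrel hl, fockMap_surjective hrel hl hspan hgr hres hN⟩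
  simpa [Function.comp_def] using hbij.comp e.bijective
end
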